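/- There exist constants c₀ > 0 and C > 0 such that the following holds. Let ã, b̃, c, c̃ be positive real numbers satisfying cosh(c̃) = sinh(ã)·sinh(b̃)·cosh(c) − cosh(ã)·cosh(b̃) (the relation for a convex right-angled hyperbolic hexagon). If c > 2·(ã + b̃ + c₀) and min{ã, b̃} > c₀, then |c̃ − c − log(sinh(ã)) − log(sinh(b̃))| ≤ C·e^{−c̃/2}. -/

import Mathlib

/-!
Put `X = exp c̃` and `Y = sinh ã sinh b̃ · exp c`. In exponentials the hexagon relation reads
`X - Y = sinh ã sinh b̃ · exp (-c) - 2 cosh ã cosh b̃ - exp (-c̃)`, which is `O(sinh ã sinh b̃)`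
once `ã, b̃` are bounded below. Since `c > 2 (ã + b̃ + c₀)`, this error is `O(√Y)`, so
`c̃ - c - log (sinh ã sinh b̃) = log X - log Y = O(1 / √Y) = O(exp (-c̃ / 2))`.
-/

open Real

namespace Real

lemma abs_sub_le_of_abs_exp_sub_exp_le {t s m : ℝ} (h : |exp t - exp s| ≤ m)
    (hm : 2 * m ≤ exp s) : |t - s| ≤ 2 * m / exp s := by
  have hs := exp_pos s
  have ht := exp_pos t
  obtain ⟨hlo, hhi⟩ := abs_le.mp h
  have hts : exp s / 2 ≤ exp t := by linarith
  have hm0 : 0 ≤ m := by linarith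
  rw [abs_le]
  constructor
  · have key : s - t + 1 ≤ exp s / exp t := exp_sub s t ▸ add_one_le_exp (s - t)
    have : exp s / exp t - 1 ≤ 2 * m / exp s := by
      rw [div_sub_one ht.ne', div_le_div_iff₀ ht hs]
      nlinarith
    linarith
  · have key : t - s + 1 ≤ exp t / exp s := exp_sub t s ▸ add_one_le_exp (t - s)
    have : exp t / exp s - 1 ≤ 2 * m / exp s := by
      rw [div_sub_one hs.ne']
      exact div_le_div_of_nonneg_right (by linarith) hs.le
    linarith

lemma abs_sub_le_two_mul_exp_neg_half {t s m : ℝ} (h : |exp t - exp s| ≤ m)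
    (hm : 2 * m ≤ exp s) (hm_sq : 4 * m ^ 2 ≤ exp s) : |t - s| ≤ 2 * exp (-t / 2) := by
  have hs := exp_pos s
  have hm0 : 0 ≤ m := by linarith [abs_nonneg (exp t - exp s)]
  have hw : exp (-t / 2) ^ 2 * exp t = 1 := by
    rw [← exp_nat_mul, ← exp_add, exp_eq_one_iff]; push_cast; ring
  have hX : exp t ≤ 3 / 2 * exp s := by linarith [(abs_le.mp h).2]
  have hmw : m ≤ exp s * exp (-t / 2) := by
    refine le_of_sq_le_sq ?_ (by positivity)
    have hYw : 2 / 3 ≤ exp s * exp (-t / 2) ^ 2 := by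
      nlinarith [mul_le_mul_of_nonneg_left hX (sq_nonneg (exp (-t / 2)))]
    nlinarith
  calc |t - s| ≤ 2 * m / exp s := abs_sub_le_of_abs_exp_sub_exp_le h hm
    _ ≤ 2 * exp (-t / 2) := by
      rw [div_le_iff₀ hs]; nlinarith

lemma cosh_le_two_mul_sinh {x : ℝ} (hx : 1 ≤ sinh x) : cosh x ≤ 2 * sinh x := by
  nlinarith [cosh_sq x, cosh_pos x]

lemma sinh_mul_sinh_le_exp_add {x y : ℝ} (hx : 0 ≤ x) (hy : 0 ≤ y) :
    sinh x * sinh y ≤ exp (x + y) / 4 := by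
  have hsinh (z : ℝ) : sinh z ≤ exp z / 2 := by
    rw [sinh_eq]; linarith [exp_pos (-z)]
  rw [exp_add]
  nlinarith [hsinh x, hsinh y, sinh_nonneg_iff.mpr hx, sinh_nonneg_iff.mpr hy, exp_pos x]

end Real

lemma exp_sub_mul_exp_eq_of_cosh_eq {x y p q : ℝ} (h : cosh y = p * cosh x - q) :
    exp y - p * exp x = p * exp (-x) - 2 * q - exp (-y) := by
  rw [cosh_eq, cosh_eq] at h
  linarith

lemma abs_exp_sub_sinh_mul_sinh_mul_exp_le {ta tb c tc : ℝ} (hA : 1 ≤ sinh ta)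
    (hB : 1 ≤ sinh tb) (hc : 0 ≤ c) (htc : 0 ≤ tc)
    (h : cosh tc = sinh ta * sinh tb * cosh c - cosh ta * cosh tb) :
    |exp tc - sinh ta * sinh tb * exp c| ≤ 9 * (sinh ta * sinh tb) := by
  have hP : 1 ≤ sinh ta * sinh tb := by nlinarith
  have hK : cosh ta * cosh tb ≤ 4 * (sinh ta * sinh tb) := by
    nlinarith [cosh_le_two_mul_sinh hA, cosh_le_two_mul_sinh hB, cosh_pos ta]
  have hec : exp (-c) ≤ 1 := exp_le_one_iff.mpr (by linarith)
  have hetc : exp (-tc) ≤ 1 := exp_le_one_iff.mpr (by linarith)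
  rw [exp_sub_mul_exp_eq_of_cosh_eq h, abs_le]
  constructor <;> nlinarith [exp_pos (-c), exp_pos (-tc), mul_pos (cosh_pos ta) (cosh_pos tb)]

theorem stmt_4 :
    ∃ c₀ > (0 : ℝ), ∃ C > (0 : ℝ),
      ∀ ta tb c tc : ℝ, 0 < ta → 0 < tb → 0 < c → 0 < tc →
        Real.cosh tc = Real.sinh ta * Real.sinh tb * Real.cosh c
            - Real.cosh ta * Real.cosh tb →
        c > 2 * (ta + tb + c₀) →
        min ta tb > c₀ →
        |tc - c - Real.log (Real.sinh ta) - Real.log (Real.sinh tb)|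
          ≤ C * Real.exp (-tc / 2) := by
  refine ⟨3, by norm_num, 2, by norm_num, ?_⟩
  intro ta tb c tc hta htb hc htc hrel hcgt hmin
  have hta3 : 3 < ta := hmin.trans_le (min_le_left ta tb)
  have htb3 : 3 < tb := hmin.trans_le (min_le_right ta tb)
  have hA : 1 ≤ sinh ta := by linarith [self_le_sinh_iff.mpr hta.le]
  have hB : 1 ≤ sinh tb := by linarith [self_le_sinh_iff.mpr htb.le]
  set P := sinh ta * sinh tb with hP_def
  have hP : 1 ≤ P := by nlinarith
  have hexp_s : exp (c + log P) = P * exp c := by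
    rw [exp_add, exp_log (by linarith), mul_comm]
  -- `324 = 4 * 9 ^ 2`, so that `4 * (9 * P) ^ 2 ≤ P * exp c`
  have hPc : 324 * P ≤ exp c :=
    calc 324 * P ≤ 81 * exp (ta + tb) := by linarith [sinh_mul_sinh_le_exp_add hta.le htb.le]
      _ ≤ exp 12 * exp (ta + tb) := by
        gcongr; linarith [quadratic_le_exp_of_nonneg (by norm_num : (0 : ℝ) ≤ 12)]
      _ ≤ exp c := by rw [← exp_add]; exact exp_le_exp.mpr (by linarith)
  have hbound := abs_sub_le_two_mul_exp_neg_half (s := c + log P)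
    (hexp_s ▸ abs_exp_sub_sinh_mul_sinh_mul_exp_le hA hB hc.le htc.le hrel)
    (by rw [hexp_s]; nlinarith) (by rw [hexp_s]; nlinarith)
  rwa [hP_def, log_mul (by positivity) (by positivity), ← sub_sub, ← sub_sub] at hbound
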